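/- arXiv:2302.09729 — 2 statements merged into one kernel-verified Lean document; each statement's English description precedes it below -/
import Mathlib

section
/- If Y is a binomial random variable with parameters K and p where p = m/K for some integer m with 0 < m < K, then P(Y = m) ≥ (1/3)·(p·(1-p)·K)^(-1/2). -/
/-!
Write `n! = s n * √(2n) (n/e)^n` with the Stirling sequence `s`. Then the point probability of
`Bin(m + k, m/(m + k))` at `m` is exactly `s (m + k) / (s m * s k) / √2 * √((m + k)/(m k))`, and
`(m + k)/(m k)` is the inverse variance. Since `s` decreases from `s 1 = e/√2` to its limit `√π`, the
Stirling factor is at least `√π / (e/√2)^2 / √2 = √(2π)/e² ≥ 1/3`.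
-/

open Real Nat Stirling

namespace Stirling

theorem stirlingSeq_le_exp_one_div_sqrt_two {n : ℕ} (hn : n ≠ 0) : stirlingSeq n ≤ exp 1 / √2 := by
  obtain ⟨n, rfl⟩ := exists_eq_succ_of_ne_zero hn
  simpa using stirlingSeq'_antitone (Nat.zero_le n)

theorem factorial_eq_stirlingSeq_mul {n : ℕ} (hn : n ≠ 0) :
    (n ! : ℝ) = stirlingSeq n * (√(2 * n) * (n / exp 1) ^ n) := by
  rw [stirlingSeq, div_mul_cancel₀]
  positivity

end Stirling

theorem exp_one_sq_le_three_mul_sqrt_two_pi : exp 1 ^ 2 ≤ 3 * √(2 * π) := by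
  have h : (2.506 : ℝ) ≤ √(2 * π) := by
    rw [le_sqrt (by norm_num) (by positivity)]
    nlinarith [pi_gt_d6]
  nlinarith [exp_one_lt_d9, exp_pos 1]

theorem one_div_three_le_stirlingSeq_div_stirlingSeq_mul_stirlingSeq {n a b : ℕ} (hn : n ≠ 0)
    (ha : a ≠ 0) (hb : b ≠ 0) :
    1 / 3 ≤ stirlingSeq n / (stirlingSeq a * stirlingSeq b) / √2 := by
  have hsa := (sqrt_pi_le_stirlingSeq ha).trans_lt' (by positivity)
  have hsb := (sqrt_pi_le_stirlingSeq hb).trans_lt' (by positivity)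
  have hden : stirlingSeq a * stirlingSeq b ≤ (exp 1 / √2) ^ 2 := by
    rw [sq]
    exact mul_le_mul (stirlingSeq_le_exp_one_div_sqrt_two ha)
      (stirlingSeq_le_exp_one_div_sqrt_two hb) hsb.le (by positivity)
  have hsn := sqrt_pi_le_stirlingSeq hn
  calc 1 / 3 ≤ √(2 * π) / exp 1 ^ 2 := by
        rw [div_le_div_iff₀ (by norm_num) (by positivity)]
        linarith [exp_one_sq_le_three_mul_sqrt_two_pi]
    _ = √π / (exp 1 / √2) ^ 2 / √2 := by
        rw [div_pow, sq_sqrt zero_le_two, sqrt_mul zero_le_two]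
        field_simp
        rw [sq_sqrt zero_le_two]
    _ ≤ stirlingSeq n / (stirlingSeq a * stirlingSeq b) / √2 := by
        gcongr
        exact (sqrt_nonneg π).trans hsn

theorem add_choose_mul_pow_mul_pow_eq_stirlingSeq {m k : ℕ} (hm : m ≠ 0) (hk : k ≠ 0) :
    ((m + k).choose m : ℝ) * (m / (m + k)) ^ m * (k / (m + k)) ^ k
      = stirlingSeq (m + k) / (stirlingSeq m * stirlingSeq k) / √2 * √((m + k) / (m * k)) := by
  have hm' : (0 : ℝ) < m := by positivity
  have hk' : (0 : ℝ) < k := by positivity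
  have hpow : ((m + k : ℝ) / exp 1) ^ (m + k) * (m / (m + k)) ^ m * (k / (m + k)) ^ k
      = (m / exp 1) ^ m * (k / exp 1) ^ k := by
    simp only [pow_add, div_pow]
    field_simp
  have hsqrt : √(2 * (m + k)) / (√(2 * m) * √(2 * k)) = 1 / √2 * √((m + k) / (m * k)) := by
    rw [← sqrt_mul (by positivity), ← sqrt_div (by positivity), one_div, ← sqrt_inv,
      ← sqrt_mul (by positivity)]
    congr 1
    field_simp
  have hsm := (sqrt_pi_le_stirlingSeq hm).trans_lt' (by positivity)
  have hsk := (sqrt_pi_le_stirlingSeq hk).trans_lt' (by positivity)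
  rw [div_eq_mul_one_div _ √2, mul_assoc _ (1 / √2), ← hsqrt, cast_add_choose,
    factorial_eq_stirlingSeq_mul (by omega), factorial_eq_stirlingSeq_mul hm,
    factorial_eq_stirlingSeq_mul hk, cast_add]
  field_simp
  linear_combination stirlingSeq (m + k) * hpow

/-- Point-probability lower bound for a binomial random variable at its mean:
if `Y ~ Bin(K, p)` with `p = m/K`, `0 < m < K`, then
`P(Y = m) ≥ (1/3)·(p(1-p)K)^(-1/2)`. -/
theorem binomial_point_prob (K m : ℕ) (hm0 : 0 < m) (hmK : m < K) (p : ℝ)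
    (hp : p = (m : ℝ) / K) :
    (1 / 3) * (p * (1 - p) * K) ^ (-(1 / 2 : ℝ))
      ≤ (K.choose m : ℝ) * p ^ m * (1 - p) ^ (K - m) := by
  obtain ⟨k, rfl⟩ := Nat.exists_eq_add_of_le hmK.le
  have hk0 : k ≠ 0 := by omega
  have hm : (0 : ℝ) < m := by exact_mod_cast hm0
  have hk : (0 : ℝ) < k := by exact_mod_cast Nat.pos_of_ne_zero hk0
  push_cast at hp ⊢
  have hq : 1 - p = k / (m + k) := by
    rw [hp]
    field_simp
    ring
  have hvar : (p * (1 - p) * (m + k)) ^ (-(1 / 2 : ℝ)) = √((m + k) / (m * k)) := by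
    rw [hq, hp, rpow_neg (by positivity), ← sqrt_eq_rpow, ← sqrt_inv]
    congr 1
    field_simp
  rw [hvar, Nat.add_sub_cancel_left, hq, hp, add_choose_mul_pow_mul_pow_eq_stirlingSeq hm0.ne' hk0]
  exact mul_le_mul_of_nonneg_right
    (one_div_three_le_stirlingSeq_div_stirlingSeq_mul_stirlingSeq (by omega) hm0.ne' hk0)
    (sqrt_nonneg _)
end

section
/- With λ = (1-ζ')·‖d‖₁/2 and Λ_{jk} = (1-ζ)·‖d‖₁/(‖d‖₁ + d_j·d_k), the product λ·Λ_{jk}·Q_{jk} equals (1 + O(ζ + ζ' + Δ/‖d‖₁))·d_j·d_k/(‖d‖₁ + d_j·d_k), where Q_{jk} = d_j·d_k/Σ_{h<ℓ} d_h·d_ℓ. -/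
/-!
Write `S = ‖d‖₁` and `T = ∑_{h<ℓ} d_h d_ℓ`. The product equals
`(1 - ζ)(1 - ζ') · S² / (2T) · P_{jk}`, and `2T = S² - ∑ d_i²` with `∑ d_i² ≤ Δ S`, so for
`Δ ≤ S / 2` the ratio `S² / (2T)` lies in `[1, 1 + 2Δ/S]`. This gives the bound with `C = 2`.
-/

open Finset

theorem Finset.two_mul_sum_filter_lt_add_sum_mul_self {ι R : Type*} [Fintype ι] [LinearOrder ι]
    [CommSemiring R] (f : ι → R) :
    2 * ∑ p ∈ univ.filter (fun p : ι × ι => p.1 < p.2), f p.1 * f p.2 + ∑ i, f i * f i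
      = (∑ i, f i) ^ 2 := by
  have hswap : ∑ p ∈ univ.filter (fun p : ι × ι => p.2 < p.1), f p.1 * f p.2
      = ∑ p ∈ univ.filter (fun p : ι × ι => p.1 < p.2), f p.1 * f p.2 :=
    sum_equiv (Equiv.prodComm ι ι) (by simp) (by simp [mul_comm])
  have hdiag : ∑ p ∈ univ.filter (fun p : ι × ι => p.1 = p.2), f p.1 * f p.2
      = ∑ i, f i * f i := by
    simp [sum_filter, Fintype.sum_prod_type]
  have hsplit : ∑ p : ι × ι, f p.1 * f p.2
      = ∑ p ∈ univ.filter (fun p : ι × ι => p.1 < p.2), f p.1 * f p.2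
        + ∑ p ∈ univ.filter (fun p : ι × ι => p.2 < p.1), f p.1 * f p.2
        + ∑ p ∈ univ.filter (fun p : ι × ι => p.1 = p.2), f p.1 * f p.2 := by
    simp only [sum_filter, ← sum_add_distrib]
    refine sum_congr rfl fun p _ => ?_
    rcases lt_trichotomy p.1 p.2 with h | h | h
    · simp [h, h.ne, not_lt_of_gt h]
    · simp [h]
    · simp [h, h.ne', not_lt_of_gt h]
  rw [sq, sum_mul_sum, ← sum_product', univ_product_univ, hsplit, hswap, hdiag, two_mul]

theorem Finset.sum_mul_self_le_mul_sum {ι R : Type*} [Semiring R] [PartialOrder R]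
    [IsOrderedRing R] (s : Finset ι) (x : ι → R) {M : R}
    (hx : ∀ i ∈ s, 0 ≤ x i) (hM : ∀ i ∈ s, x i ≤ M) :
    ∑ i ∈ s, x i * x i ≤ M * ∑ i ∈ s, x i := by
  rw [mul_sum]
  exact sum_le_sum fun i hi => mul_le_mul_of_nonneg_right (hM i hi) (hx i hi)

section OrderedField

variable {K : Type*} [Field K] [LinearOrder K] [IsStrictOrderedRing K]

theorem div_sub_le_one_add_two_mul {a q δ : K} (ha : 0 < a) (hq : 0 ≤ q) (hqδ : q ≤ δ * a)
    (hδ : 2 * δ ≤ 1) : a / (a - q) ≤ 1 + 2 * δ := by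
  have hδ0 : 0 ≤ δ := nonneg_of_mul_nonneg_left (hq.trans hqδ) ha
  rw [div_le_iff₀ (by nlinarith)]
  nlinarith [mul_nonneg (mul_nonneg hδ0 ha.le) (sub_nonneg.2 hδ)]

theorem abs_one_sub_mul_one_sub_mul_sub_one_le {ζ ζ' r δ : K} (hζ : 0 ≤ ζ) (hζ1 : ζ ≤ 1)
    (hζ' : 0 ≤ ζ') (hζ'1 : ζ' ≤ 1) (hr : 1 ≤ r) (hrδ : r ≤ 1 + 2 * δ) :
    |(1 - ζ) * (1 - ζ') * r - 1| ≤ 2 * (ζ + ζ' + δ) := by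
  have hc0 : 0 ≤ (1 - ζ) * (1 - ζ') := mul_nonneg (by linarith) (by linarith)
  have hc1 : (1 - ζ) * (1 - ζ') ≤ 1 := by nlinarith
  rw [abs_le]
  constructor <;> nlinarith

end OrderedField

/-- With `λ = (1-ζ')‖d‖₁/2`, `Λ_{jk} = (1-ζ)‖d‖₁/(‖d‖₁ + d_j d_k)` and
`Q_{jk} = d_j d_k / ∑_{h<ℓ} d_h d_ℓ`, the product `λ Λ_{jk} Q_{jk}` equals
`(1 + O(ζ + ζ' + Δ/‖d‖₁)) · d_j d_k/(‖d‖₁ + d_j d_k)`: there is an absolute constant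
`C` such that (under `Δ ≤ ‖d‖₁/2`)
`|λ Λ_{jk} Q_{jk} - P_{jk}| ≤ C(ζ + ζ' + Δ/‖d‖₁) P_{jk}`. -/
theorem lambda_Lambda_Q_asymp :
    ∃ C : ℝ, 0 < C ∧ ∀ (n : ℕ) (d : Fin n → ℕ) (ζ ζ' : ℝ) (Δ : ℕ),
      2 ≤ n → (∀ i, 0 < d i) → (∀ i, d i ≤ Δ) →
      0 < ζ → ζ < 1 → 0 < ζ' → ζ' < 1 →
      (Δ : ℝ) ≤ (∑ i, (d i : ℝ)) / 2 →
      ∀ j k : Fin n, j ≠ k →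
        |((1 - ζ') * (∑ i, (d i : ℝ)) / 2) *
              ((1 - ζ) * (∑ i, (d i : ℝ)) / ((∑ i, (d i : ℝ)) + d j * d k)) *
              ((d j : ℝ) * d k /
                ∑ p ∈ Finset.univ.filter (fun p : Fin n × Fin n => p.1 < p.2),
                  (d p.1 : ℝ) * d p.2)
            - (d j : ℝ) * d k / ((∑ i, (d i : ℝ)) + d j * d k)|
          ≤ C * (ζ + ζ' + (Δ : ℝ) / ∑ i, (d i : ℝ)) *
              ((d j : ℝ) * d k / ((∑ i, (d i : ℝ)) + d j * d k)) := by
  refine ⟨2, two_pos, fun n d ζ ζ' Δ _ hd hdΔ hζ hζ1 hζ' hζ'1 hΔ j k _ => ?_⟩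
  set S : ℝ := ∑ i, (d i : ℝ)
  set T : ℝ := ∑ p ∈ univ.filter (fun p : Fin n × Fin n => p.1 < p.2), (d p.1 : ℝ) * d p.2
  set q : ℝ := ∑ i, (d i : ℝ) * d i
  set P : ℝ := (d j : ℝ) * d k / (S + d j * d k)
  have hS : 0 < S := sum_pos (fun i _ => by exact_mod_cast hd i) ⟨j, mem_univ j⟩
  have hq : 0 ≤ q := sum_nonneg fun i _ => by positivity
  have hδ : Δ / S ≤ 1 / 2 := by rw [div_le_iff₀ hS]; linarith
  have hqΔ : q ≤ Δ / S * S ^ 2 := calc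
    q ≤ Δ * S := sum_mul_self_le_mul_sum _ _ (fun i _ => by positivity)
      fun i _ => by exact_mod_cast hdΔ i
    _ = Δ / S * S ^ 2 := by field_simp
  have hT : 2 * T = S ^ 2 - q := by
    linarith [two_mul_sum_filter_lt_add_sum_mul_self fun i => (d i : ℝ)]
  have hT0 : 0 < 2 * T := by rw [hT]; nlinarith
  have hr1 : 1 ≤ S ^ 2 / (2 * T) := by rw [one_le_div hT0, hT]; linarith
  have hr : S ^ 2 / (2 * T) ≤ 1 + 2 * (Δ / S) := by
    rw [hT]
    exact div_sub_le_one_add_two_mul (by positivity) hq hqΔ (by linarith)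
  have hprod : ((1 - ζ') * S / 2) * ((1 - ζ) * S / (S + d j * d k)) * ((d j : ℝ) * d k / T)
      = (1 - ζ) * (1 - ζ') * (S ^ 2 / (2 * T)) * P := by
    simp only [P]
    field_simp
  have hP : 0 ≤ P := by positivity
  rw [hprod, ← sub_one_mul, abs_mul, abs_of_nonneg hP]
  exact mul_le_mul_of_nonneg_right
    (abs_one_sub_mul_one_sub_mul_sub_one_le hζ.le hζ1.le hζ'.le hζ'1.le hr1 hr) hP
end
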